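/- arXiv:1709.07996 — 2 statements merged into one kernel-verified Lean document; each statement's English description precedes it below -/
import Mathlib

section
/- If z ∈ Ĩ_n and both i and i+1 are fixed points of z, then z·s_i is again an involution in S̃_n, and ℓ'(z s_i) = ℓ'(z) + 1, where ℓ'(y) is the number of 2-cycles of y up to translation by n. -/
open Finset

/-- `w` is an element of the affine symmetric group `S̃_n`: a bijection `ℤ → ℤ` with
`w (i + n) = w i + n` for all `i` and `∑_{i=1}^n w i = n (n+1)/2`. -/
def IsAffine (n : ℕ) (w : Equiv.Perm ℤ) : Prop :=
  (∀ i : ℤ, w (i + n) = w i + n) ∧ ∑ i ∈ Finset.Icc (1 : ℤ) (n : ℤ), (w i - i) = 0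

/-- The Coxeter length of `w ∈ S̃_n`: the number of inversions `(i, j)`, `i < j`,
`w i > w j`, counted up to the equivalence `(i,j) ∼ (i+n, j+n)` (representatives with
`i ∈ [n]`). -/
noncomputable def affLen (n : ℕ) (w : Equiv.Perm ℤ) : ℕ :=
  Nat.card {p : ℤ × ℤ // 1 ≤ p.1 ∧ p.1 ≤ (n : ℤ) ∧ p.1 < p.2 ∧ w p.2 < w p.1}

/-- The absolute length of an involution `z ∈ Ĩ_n`: the number of 2-cycles
`(i, j)` with `i < j = z i`, counted up to the equivalence `(i,j) ∼ (i+n, j+n)`. -/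
noncomputable def absLen (n : ℕ) (z : Equiv.Perm ℤ) : ℕ :=
  Nat.card {p : ℤ × ℤ // 1 ≤ p.1 ∧ p.1 ≤ (n : ℤ) ∧ p.1 < p.2 ∧ z p.1 = p.2}

/-- The underlying function of the reflection `t_{i j}`: it sends `i + m n ↦ j + m n` and
`j + m n ↦ i + m n` for all `m`, fixing everything else. -/
def tFun (n : ℕ) (i j x : ℤ) : ℤ :=
  if (n : ℤ) ∣ x - i then x + (j - i) else if (n : ℤ) ∣ x - j then x - (j - i) else x

theorem tFun_comp (n : ℕ) (i j x : ℤ) : tFun n j i (tFun n i j x) = x := by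
  unfold tFun
  by_cases h1 : (n : ℤ) ∣ x - i
  · rw [if_pos h1]
    have c1 : (n : ℤ) ∣ x + (j - i) - j := by
      have e : x + (j - i) - j = x - i := by ring
      rw [e]; exact h1
    rw [if_pos c1]; ring
  · rw [if_neg h1]
    by_cases h2 : (n : ℤ) ∣ x - j
    · rw [if_pos h2]
      have c1 : ¬ (n : ℤ) ∣ x - (j - i) - j := by
        intro hc
        apply h1
        have e : x - i = 2 * (x - j) - (x - (j - i) - j) := by ring
        rw [e]
        exact dvd_sub (Dvd.dvd.mul_left h2 2) hc
      have c2 : (n : ℤ) ∣ x - (j - i) - i := by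
        have e : x - (j - i) - i = x - j := by ring
        rw [e]; exact h2
      rw [if_neg c1, if_pos c2]; ring
    · simp only [if_neg h1, if_neg h2]

/-- The reflection `t_{i j} ∈ S̃_n`. -/
def tPerm (n : ℕ) (i j : ℤ) : Equiv.Perm ℤ :=
  ⟨tFun n i j, tFun n j i, fun x => tFun_comp n i j x, fun x => tFun_comp n j i x⟩

/-- The simple generator `s_i = t_{i, i+1} ∈ S̃_n`. -/
def sPerm (n : ℕ) (i : ℤ) : Equiv.Perm ℤ := tPerm n i (i + 1)

/-!
A periodic permutation fixing `i` and `i + 1` fixes their whole residue classes mod `n`, which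
contain the support of `s_i`; hence `z` and `s_i` are disjoint permutations. Disjoint permutations
commute, so `z s_i` is an involution, and both the normalisation sum defining `S̃_n` and the number
of points `x ∈ [1, n]` with `x < w x` are additive over disjoint products. For `s_i` that number
is `1`, the single 2-cycle class `(i, i + 1)`.
-/

open Equiv

section Periodic

variable {n : ℕ} {w : Perm ℤ}

theorem apply_add_mul_of_periodic (hw : ∀ x, w (x + n) = w x + n) (x k : ℤ) :
    w (x + k * n) = w x + k * n := by
  induction k using Int.induction_on with
  | zero => simp
  | succ k ih =>
    have := hw (x + k * n)
    rw [add_assoc, ← add_one_mul] at this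
    linarith
  | pred k ih =>
    have := hw (x + (-k - 1) * n)
    rw [add_assoc, show (-k - 1 : ℤ) * n + n = -k * n by ring] at this
    linarith

theorem apply_eq_self_of_dvd_sub (hw : ∀ x, w (x + n) = w x + n) {i x : ℤ} (hi : w i = i)
    (h : (n : ℤ) ∣ x - i) : w x = x := by
  obtain ⟨k, hk⟩ := h
  rw [show x = i + k * n by linarith, apply_add_mul_of_periodic hw, hi]

end Periodic

theorem card_filter_dvd_sub_Icc {n : ℕ} (hn : 0 < n) (c : ℤ) :
    ((Icc 1 (n : ℤ)).filter fun x => (n : ℤ) ∣ x - c).card = 1 := by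
  refine card_eq_one.mpr ⟨(c - 1) % n + 1, ?_⟩
  have hn' : (0 : ℤ) < n := by exact_mod_cast hn
  ext x
  simp only [mem_filter, mem_Icc, mem_singleton]
  constructor
  · rintro ⟨⟨hx1, hxn⟩, hdvd⟩
    have : (c - 1) ≡ (x - 1) [ZMOD n] := Int.modEq_iff_dvd.mpr (by simpa using hdvd)
    rw [this, Int.emod_eq_of_lt (by omega) (by omega)]
    ring
  · rintro rfl
    refine ⟨⟨by have := Int.emod_nonneg (c - 1) hn'.ne'; omega,
      by have := Int.emod_lt_of_pos (c - 1) hn'; omega⟩, ?_⟩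
    exact ⟨-((c - 1) / n), by rw [Int.emod_def]; ring⟩

namespace Equiv.Perm.Disjoint

variable {α : Type*} {u v : Perm α}

theorem mul_apply_of_apply_eq_self_left (h : u.Disjoint v) {x : α} (hx : u x = x) :
    (u * v) x = v x := by
  rcases h (v x) with huv | hvv
  · exact huv
  · rw [mul_apply, v.injective hvv, hx]

theorem mul_apply_sub_self [AddGroup α] (h : u.Disjoint v) (x : α) :
    (u * v) x - x = (u x - x) + (v x - x) := by
  rcases h x with hu | hv
  · rw [h.mul_apply_of_apply_eq_self_left hu, hu, sub_self, zero_add]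
  · rw [mul_apply, hv, sub_self, add_zero]

theorem lt_mul_apply_iff [Preorder α] (h : u.Disjoint v) (x : α) :
    x < (u * v) x ↔ x < u x ∨ x < v x := by
  rcases h x with hu | hv
  · rw [h.mul_apply_of_apply_eq_self_left hu, hu]; simp
  · rw [mul_apply, hv]; simp

end Equiv.Perm.Disjoint

section SimpleReflection

variable {n : ℕ} (i : ℤ) {x : ℤ}

theorem sPerm_apply : sPerm n i x =
    if (n : ℤ) ∣ x - i then x + 1 else if (n : ℤ) ∣ x - (i + 1) then x - 1 else x := by
  simp [sPerm, tPerm, tFun]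

theorem sPerm_apply_of_dvd_sub (h : (n : ℤ) ∣ x - i) : sPerm n i x = x + 1 := by
  rw [sPerm_apply, if_pos h]

theorem not_dvd_sub_succ_of_dvd_sub (hn : n ≠ 1) (h : (n : ℤ) ∣ x - i) :
    ¬ (n : ℤ) ∣ x - (i + 1) := fun h' => by
  have := dvd_sub h h'
  rw [show x - i - (x - (i + 1)) = 1 by ring] at this
  exact hn (by exact_mod_cast Int.eq_one_of_dvd_one (by positivity) this)

theorem sPerm_apply_of_dvd_sub_succ (hn : n ≠ 1) (h : (n : ℤ) ∣ x - (i + 1)) :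
    sPerm n i x = x - 1 := by
  rw [sPerm_apply, if_neg fun h' => not_dvd_sub_succ_of_dvd_sub i hn h' h, if_pos h]

theorem sPerm_apply_of_not_dvd (h : ¬ (n : ℤ) ∣ x - i) (h' : ¬ (n : ℤ) ∣ x - (i + 1)) :
    sPerm n i x = x := by
  rw [sPerm_apply, if_neg h, if_neg h']

theorem sPerm_apply_add_self (x : ℤ) : sPerm n i (x + n) = sPerm n i x + n := by
  simp only [sPerm_apply, show x + n - i = x - i + n by ring,
    show x + n - (i + 1) = x - (i + 1) + n by ring, dvd_add_self_right]
  split_ifs <;> ring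

theorem sPerm_mul_self (hn : n ≠ 1) : sPerm n i * sPerm n i = 1 := by
  ext x
  rw [Perm.mul_apply, Perm.one_apply]
  by_cases hi : (n : ℤ) ∣ x - i
  · rw [sPerm_apply_of_dvd_sub i hi, sPerm_apply_of_dvd_sub_succ i hn (by simpa using hi)]
    ring
  by_cases hi' : (n : ℤ) ∣ x - (i + 1)
  · have hi'' : (n : ℤ) ∣ x - 1 - i := by rwa [sub_sub, add_comm 1]
    rw [sPerm_apply_of_dvd_sub_succ i hn hi', sPerm_apply_of_dvd_sub i hi'']
    ring
  rw [sPerm_apply_of_not_dvd i hi hi', sPerm_apply_of_not_dvd i hi hi']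

theorem lt_sPerm_apply_iff (hn : n ≠ 1) (x : ℤ) : x < sPerm n i x ↔ (n : ℤ) ∣ x - i := by
  by_cases hi : (n : ℤ) ∣ x - i
  · simp [sPerm_apply_of_dvd_sub i hi, hi]
  by_cases hi' : (n : ℤ) ∣ x - (i + 1)
  · simp [sPerm_apply_of_dvd_sub_succ i hn hi', hi]
  · simp [sPerm_apply_of_not_dvd i hi hi', hi]

theorem sPerm_apply_sub_self (hn : n ≠ 1) (x : ℤ) :
    sPerm n i x - x =
      (if (n : ℤ) ∣ x - i then 1 else 0) - (if (n : ℤ) ∣ x - (i + 1) then 1 else 0) := by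
  by_cases hi : (n : ℤ) ∣ x - i
  · simp [sPerm_apply_of_dvd_sub i hi, hi, not_dvd_sub_succ_of_dvd_sub i hn hi]
  by_cases hi' : (n : ℤ) ∣ x - (i + 1)
  · simp [sPerm_apply_of_dvd_sub_succ i hn hi', hi, hi']
  · simp [sPerm_apply_of_not_dvd i hi hi', hi, hi']

end SimpleReflection

theorem absLen_eq_card_filter (n : ℕ) (w : Perm ℤ) :
    absLen n w = ((Icc 1 (n : ℤ)).filter fun x => x < w x).card := by
  rw [absLen, ← Nat.card_eq_finsetCard]
  exact Nat.card_congr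
    { toFun := fun p => ⟨p.1.1, by grind⟩
      invFun := fun x => ⟨(x.1, w x.1), by grind⟩
      left_inv := fun ⟨⟨_, _⟩, _, _, _, h⟩ => by simp only at h; subst h; rfl
      right_inv := fun _ => rfl }

theorem absLen_mul_of_disjoint (n : ℕ) {u v : Perm ℤ} (h : u.Disjoint v) :
    absLen n (u * v) = absLen n u + absLen n v := by
  classical
  simp only [absLen_eq_card_filter, h.lt_mul_apply_iff, filter_or]
  exact card_union_of_disjoint <| disjoint_filter.mpr fun x _ hu hv =>
    (h x).elim hu.ne' hv.ne'

theorem absLen_sPerm {n : ℕ} (hn : 1 < n) (i : ℤ) : absLen n (sPerm n i) = 1 := by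
  simp only [absLen_eq_card_filter, lt_sPerm_apply_iff i hn.ne']
  exact card_filter_dvd_sub_Icc (by omega) i

theorem IsAffine.mul_of_disjoint {n : ℕ} {u v : Perm ℤ} (hu : IsAffine n u) (hv : IsAffine n v)
    (h : u.Disjoint v) : IsAffine n (u * v) := by
  refine ⟨fun x => by rw [Perm.mul_apply, hv.1, hu.1, Perm.mul_apply], ?_⟩
  simp only [h.mul_apply_sub_self, sum_add_distrib, hu.2, hv.2, add_zero]

theorem isAffine_sPerm {n : ℕ} (hn : 1 < n) (i : ℤ) : IsAffine n (sPerm n i) := by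
  refine ⟨sPerm_apply_add_self i, ?_⟩
  simp only [sPerm_apply_sub_self i hn.ne', sum_sub_distrib, sum_boole,
    card_filter_dvd_sub_Icc (n := n) (by omega), sub_self]

theorem disjoint_sPerm {n : ℕ} {w : Perm ℤ} (hw : ∀ x, w (x + n) = w x + n) {i : ℤ}
    (h1 : w i = i) (h2 : w (i + 1) = i + 1) : w.Disjoint (sPerm n i) := fun x => by
  by_cases hi : (n : ℤ) ∣ x - i
  · exact .inl (apply_eq_self_of_dvd_sub hw h1 hi)
  by_cases hi' : (n : ℤ) ∣ x - (i + 1)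
  · exact .inl (apply_eq_self_of_dvd_sub hw h2 hi')
  · exact .inr (sPerm_apply_of_not_dvd i hi hi')

/-- If `i` and `i+1` are fixed points of `z ∈ Ĩ_n`, then `z s_i` is again an involution in
`S̃_n` and `ℓ'(z s_i) = ℓ'(z) + 1`. -/
theorem absLen_mul_s (n : ℕ) (hn : 2 ≤ n) (z : Equiv.Perm ℤ)
    (hz : IsAffine n z) (hinv : ∀ x : ℤ, z (z x) = x) (i : ℤ)
    (h1 : z i = i) (h2 : z (i + 1) = i + 1) :
    IsAffine n (z * sPerm n i) ∧ (∀ x : ℤ, (z * sPerm n i) ((z * sPerm n i) x) = x) ∧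
      absLen n (z * sPerm n i) = absLen n z + 1 := by
  have hdisj : z.Disjoint (sPerm n i) := disjoint_sPerm hz.1 h1 h2
  refine ⟨hz.mul_of_disjoint (isAffine_sPerm hn i) hdisj, fun x => ?_, ?_⟩
  · have hz2 : z * z = 1 := Perm.ext hinv
    rw [← Perm.mul_apply, hdisj.commute.symm.mul_mul_mul_comm, hz2, sPerm_mul_self i (by omega),
      one_mul, Perm.one_apply]
  · rw [absLen_mul_of_disjoint n hdisj, absLen_sPerm hn]
end

section
/- Let z ∈ Ĩ_n and i < j with j ≢ i (mod n). Suppose that either all of i, i+1, …, j−1 are right endpoints of z, or all of i+1, …, j−1, j are left endpoints of z. Then ℓ(t_{ij} z t_{ij}) = ℓ(z) + 2 if and only if ℓ(z t_{ij}) = ℓ(z) + 1. -/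
open Finset

/-!
Inversions of an `n`-periodic permutation are counted through their representatives `(a, b)`
with `a ∈ [1, n]`. For a periodic involution `t`, the bijections `(a, b) ↦ (t a, t b)` and
`(a, b) ↦ (t b, t a)` give `ℓ(w t) = ℓ(w) + ℓ(t) - 2 c(w)`, where `c(w)` counts the common
inversions of `w` and `t`. For `t = t_{ij}` with `0 < j - i < n`, every inversion of `t` is a
translate of a pair `(i, k)` or `(k, j)` of its hook, so `c(w)` only sees `w` on `[i, j]`, and
`ℓ(t) = 2 (j - i) - 1`. As `ℓ(t z) = ℓ(z t)`, the condition `ℓ(z t) = ℓ(z) + 1` becomes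
`c(z) = j - i - 1`, and `ℓ(t z t) = ℓ(z) + 2` becomes `c(z) + c(t z) = 2 (j - i - 1)`.

If `i, …, j - 1` are right endpoints of `z`, then `j - i < n` and `z` maps `[i, j)` below `i`; a
case analysis on `z j` shows that `c(t z) = c(z)` or `c(t z) = c(z) + 1 ≤ j - i - 1`, and parity
gives the equivalence. Conjugation by `x ↦ -x` exchanges left and right endpoints and maps
`t_{ij}` to `t_{-j,-i}`.
-/

theorem Int.ModEq.eq_of_abs_lt {m a b : ℤ} (h : a ≡ b [ZMOD m]) (h₂ : |b - a| < m) : a = b := by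
  have := Int.eq_zero_of_abs_lt_dvd (Int.modEq_iff_dvd.1 h) h₂
  omega

theorem Int.not_modEq_of_lt_of_sub_lt {m a b : ℤ} (h₁ : a < b) (h₂ : b - a < m) :
    ¬ a ≡ b [ZMOD m] := fun h =>
  h₁.ne (h.eq_of_abs_lt (abs_sub_lt_iff.2 ⟨h₂, by omega⟩))

def IsPeriodic (n : ℕ) (w : Equiv.Perm ℤ) : Prop := ∀ x : ℤ, w (x + n) = w x + n

namespace IsPeriodic

variable {n : ℕ} {w v : Equiv.Perm ℤ}

theorem apply_add_mul (hw : IsPeriodic n w) (x m : ℤ) : w (x + n * m) = w x + n * m := by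
  induction m using Int.induction_on with
  | zero => simp
  | succ k ih => rw [mul_add_one, ← add_assoc, hw, ih, add_assoc]
  | pred k ih =>
    have := hw (x + n * (-k - 1))
    rw [add_assoc, ← mul_add_one, sub_add_cancel, ih] at this
    linarith

theorem apply_sub_eq (hw : IsPeriodic n w) {x y : ℤ} (h : x ≡ y [ZMOD n]) :
    w y - y = w x - x := by
  obtain ⟨m, rfl⟩ := Int.modEq_iff_add_fac.1 h
  rw [hw.apply_add_mul]
  ring

theorem apply_modEq (hw : IsPeriodic n w) {x y : ℤ} (h : x ≡ y [ZMOD n]) :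
    w x ≡ w y [ZMOD n] := by
  rw [Int.modEq_iff_dvd, show w y - w x = y - x by linarith [hw.apply_sub_eq h]]
  exact Int.modEq_iff_dvd.1 h

theorem mul (hw : IsPeriodic n w) (hv : IsPeriodic n v) : IsPeriodic n (w * v) := fun x => by
  simp only [Equiv.Perm.mul_apply, hv x, hw (v x)]

theorem inv (hw : IsPeriodic n w) : IsPeriodic n w⁻¹ := fun x => by
  apply w.injective
  rw [hw]
  simp

theorem modEq_iff (hw : IsPeriodic n w) {x y : ℤ} : w x ≡ w y [ZMOD n] ↔ x ≡ y [ZMOD n] :=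
  ⟨fun h => by simpa using hw.inv.apply_modEq h, hw.apply_modEq⟩

theorem exists_abs_sub_le (hw : IsPeriodic n w) (hn : 0 < n) : ∃ M, ∀ x, |w x - x| ≤ M := by
  obtain ⟨M, hM⟩ := ((Set.finite_Ico (0 : ℤ) n).image fun r => |w r - r|).bddAbove
  refine ⟨M, fun x => ?_⟩
  rw [hw.apply_sub_eq (Int.mod_modEq x n)]
  exact hM ⟨x % n, ⟨Int.emod_nonneg _ (by omega), Int.emod_lt_of_pos _ (by omega)⟩, rfl⟩

theorem conj_neg (hw : IsPeriodic n w) : IsPeriodic n (MulAut.conj (Equiv.neg ℤ) w) := fun x => by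
  change -w (-(x + n)) = -w (-x) + n
  have := hw (-(x + n))
  rw [show -(x + n) + n = -x by ring] at this
  omega

end IsPeriodic

/-- `q` is a translate of `p` by a multiple of `(n, n)`. -/
def DiagShift (n : ℕ) (p q : ℤ × ℤ) : Prop := p.1 ≡ q.1 [ZMOD n] ∧ q.2 - q.1 = p.2 - p.1

def ShiftInvariant (n : ℕ) (S : Set (ℤ × ℤ)) : Prop :=
  ∀ p q, DiagShift n p q → (p ∈ S ↔ q ∈ S)

def window (n : ℕ) (S : Set (ℤ × ℤ)) : Set (ℤ × ℤ) := {p | 1 ≤ p.1 ∧ p.1 ≤ n ∧ p ∈ S}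

namespace DiagShift

variable {n : ℕ} {p q r : ℤ × ℤ}

theorem symm (h : DiagShift n p q) : DiagShift n q p := ⟨h.1.symm, h.2.symm⟩

theorem trans (h : DiagShift n p q) (h' : DiagShift n q r) : DiagShift n p r :=
  ⟨h.1.trans h'.1, h'.2.trans h.2⟩

theorem snd_modEq (h : DiagShift n p q) : p.2 ≡ q.2 [ZMOD n] := by
  have := h.1.add_right (p.2 - p.1)
  rwa [add_sub_cancel, h.2.symm, add_sub_cancel] at this

theorem swap_iff : DiagShift n p.swap q.swap ↔ DiagShift n p q :=
  ⟨fun h => ⟨h.snd_modEq, by have := h.2; simp only [Prod.fst_swap, Prod.snd_swap] at this; omega⟩,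
   fun h => ⟨h.snd_modEq, by have := h.2; simp only [Prod.fst_swap, Prod.snd_swap]; omega⟩⟩

theorem neg_iff : DiagShift n (-p) (-q) ↔ DiagShift n p q := by
  simp only [DiagShift, Prod.fst_neg, Prod.snd_neg, Int.neg_modEq_neg]
  constructor <;> rintro ⟨h₁, h₂⟩ <;> exact ⟨h₁, by omega⟩

theorem eq_of_abs_fst_sub_lt (h : DiagShift n p q) (hpq : |q.1 - p.1| < n) : p = q := by
  have := h.1.eq_of_abs_lt hpq
  have := h.2
  ext <;> omega

theorem exists_mem_window (hn : 0 < n) (p : ℤ × ℤ) :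
    ∃ q, DiagShift n p q ∧ 1 ≤ q.1 ∧ q.1 ≤ n := by
  refine ⟨((p.1 - 1) % n + 1, p.2 - p.1 + ((p.1 - 1) % n + 1)), ⟨?_, by ring⟩, ?_, ?_⟩
  · simpa using ((Int.mod_modEq (p.1 - 1) n).add_right 1).symm
  · have := Int.emod_nonneg (p.1 - 1) (by omega : (n : ℤ) ≠ 0); omega
  · have := Int.emod_lt_of_pos (p.1 - 1) (by omega : (0 : ℤ) < n); omega

end DiagShift

theorem ShiftInvariant.inter {n : ℕ} {S T : Set (ℤ × ℤ)} (hS : ShiftInvariant n S)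
    (hT : ShiftInvariant n T) : ShiftInvariant n (S ∩ T) := fun p q h => by
  simp only [Set.mem_inter_iff, hS p q h, hT p q h]

theorem ShiftInvariant.sdiff {n : ℕ} {S T : Set (ℤ × ℤ)} (hS : ShiftInvariant n S)
    (hT : ShiftInvariant n T) : ShiftInvariant n (S \ T) := fun p q h => by
  simp only [Set.mem_sdiff, hS p q h, hT p q h]

theorem window_inter (n : ℕ) (S T : Set (ℤ × ℤ)) : window n S ∩ T = window n (S ∩ T) := by
  ext p; simp only [window, Set.mem_inter_iff, Set.mem_ofPred_eq]; tauto

theorem window_sdiff (n : ℕ) (S T : Set (ℤ × ℤ)) : window n S \ T = window n (S \ T) := by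
  ext p; simp only [window, Set.mem_sdiff, Set.mem_ofPred_eq]; tauto

theorem ncard_window_eq_of_transversal {n : ℕ} (hn : 0 < n) {S Y : Set (ℤ × ℤ)}
    (hS : ShiftInvariant n S) (hYS : Y ⊆ S) (hY : ∀ p ∈ S, ∃ q ∈ Y, DiagShift n p q)
    (hYinj : ∀ p ∈ Y, ∀ q ∈ Y, DiagShift n p q → p = q) :
    (window n S).ncard = Y.ncard := by
  choose r hr hr₁ hr₂ using DiagShift.exists_mem_window hn
  have hwin : ∀ {p q : ℤ × ℤ}, DiagShift n p q → 1 ≤ p.1 → p.1 ≤ n → 1 ≤ q.1 → q.1 ≤ n →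
      p = q := fun h _ _ _ _ => h.eq_of_abs_fst_sub_lt (abs_sub_lt_iff.2 ⟨by omega, by omega⟩)
  have himage : window n S = r '' Y := by
    ext p
    constructor
    · rintro ⟨hp₁, hp₂, hp⟩
      obtain ⟨q, hq, hpq⟩ := hY p hp
      exact ⟨q, hq, hwin ((hr q).symm.trans hpq.symm) (hr₁ q) (hr₂ q) hp₁ hp₂⟩
    · rintro ⟨q, hq, rfl⟩
      exact ⟨hr₁ q, hr₂ q, (hS q (r q) (hr q)).1 (hYS hq)⟩
  rw [himage, Set.InjOn.ncard_image]
  intro p hp q hq hpq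
  exact hYinj p hp q hq ((hr p).trans (hpq ▸ (hr q).symm))

theorem ncard_window_eq_of_equiv {n : ℕ} (hn : 0 < n) (φ : ℤ × ℤ ≃ ℤ × ℤ)
    (hφ : ∀ p q, DiagShift n (φ p) (φ q) ↔ DiagShift n p q) {S T : Set (ℤ × ℤ)}
    (hS : ShiftInvariant n S) (hST : ∀ p, φ p ∈ T ↔ p ∈ S) :
    (window n T).ncard = (window n S).ncard := by
  have hT : ShiftInvariant n T := fun p q h => by
    rw [← φ.apply_symm_apply p, ← φ.apply_symm_apply q, hST, hST]
    exact hS _ _ ((hφ _ _).1 (by simpa using h))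
  rw [ncard_window_eq_of_transversal hn hT (Y := φ '' window n S),
    Set.ncard_image_of_injective _ φ.injective]
  · rintro _ ⟨p, ⟨-, -, hp⟩, rfl⟩
    exact (hST p).2 hp
  · intro q hq
    obtain ⟨p, hp, hp₁, hp₂⟩ := DiagShift.exists_mem_window hn (φ.symm q)
    refine ⟨φ p, ⟨p, ⟨hp₁, hp₂, (hS _ _ hp).1 ((hST _).1 (by simpa using hq))⟩, rfl⟩, ?_⟩
    simpa using (hφ (φ.symm q) p).2 hp
  · rintro _ ⟨p, ⟨hp₁, hp₂, -⟩, rfl⟩ _ ⟨q, ⟨hq₁, hq₂, -⟩, rfl⟩ h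
    rw [((hφ p q).1 h).eq_of_abs_fst_sub_lt (abs_sub_lt_iff.2 ⟨by omega, by omega⟩)]

def inversions (w : Equiv.Perm ℤ) : Set (ℤ × ℤ) := {p | p.1 < p.2 ∧ w p.2 < w p.1}

theorem affLen_eq_ncard_window (n : ℕ) (w : Equiv.Perm ℤ) :
    affLen n w = (window n (inversions w)).ncard := rfl

namespace IsPeriodic

variable {n : ℕ} {w : Equiv.Perm ℤ}

theorem shiftInvariant_inversions (hw : IsPeriodic n w) : ShiftInvariant n (inversions w) := by
  suffices ∀ p q, DiagShift n p q → p ∈ inversions w → q ∈ inversions w from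
    fun p q h => ⟨this p q h, this q p h.symm⟩
  rintro p q h ⟨hlt, hinv⟩
  have h₁ := hw.apply_sub_eq h.1
  have h₂ := hw.apply_sub_eq h.snd_modEq
  have := h.2
  exact ⟨by omega, by omega⟩

theorem finite_window_inversions (hw : IsPeriodic n w) (hn : 0 < n) :
    (window n (inversions w)).Finite := by
  obtain ⟨M, hM⟩ := hw.exists_abs_sub_le hn
  refine (Set.finite_Icc ((1 : ℤ), (1 : ℤ)) (n, n + 2 * M)).subset ?_
  rintro ⟨a, b⟩ ⟨ha₁, ha₂, hab, hw'⟩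
  have := abs_le.1 (hM a)
  have := abs_le.1 (hM b)
  exact ⟨⟨ha₁, by dsimp at *; omega⟩, ha₂, by dsimp at *; omega⟩

theorem diagShift_map_iff (hw : IsPeriodic n w) {p q : ℤ × ℤ} :
    DiagShift n (w p.1, w p.2) (w q.1, w q.2) ↔ DiagShift n p q := by
  constructor
  · intro h
    have h₁ : p.1 ≡ q.1 [ZMOD n] := hw.modEq_iff.1 h.1
    have := hw.apply_sub_eq h₁
    have := hw.apply_sub_eq (hw.modEq_iff.1 h.snd_modEq)
    have := h.2
    exact ⟨h₁, by dsimp at *; omega⟩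
  · intro h
    have := hw.apply_sub_eq h.1
    have := hw.apply_sub_eq h.snd_modEq
    have := h.2
    exact ⟨hw.apply_modEq h.1, by dsimp; omega⟩

theorem diagShift_map_swap_iff (hw : IsPeriodic n w) {p q : ℤ × ℤ} :
    DiagShift n (w p.2, w p.1) (w q.2, w q.1) ↔ DiagShift n p q :=
  DiagShift.swap_iff.trans hw.diagShift_map_iff

end IsPeriodic

theorem affLen_inv {n : ℕ} (hn : 0 < n) {w : Equiv.Perm ℤ} (hw : IsPeriodic n w) :
    affLen n w⁻¹ = affLen n w :=
  ncard_window_eq_of_equiv hn ((Equiv.prodCongr w w).trans (Equiv.prodComm ℤ ℤ))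
    (fun _ _ => hw.diagShift_map_swap_iff) hw.shiftInvariant_inversions fun p => by
      change _ ∧ _ ↔ _ ∧ _
      simp [and_comm]

theorem affLen_conj_neg {n : ℕ} (hn : 0 < n) {w : Equiv.Perm ℤ} (hw : IsPeriodic n w) :
    affLen n (MulAut.conj (Equiv.neg ℤ) w) = affLen n w :=
  ncard_window_eq_of_equiv hn ((Equiv.neg (ℤ × ℤ)).trans (Equiv.prodComm ℤ ℤ))
    (fun _ _ => DiagShift.swap_iff.trans DiagShift.neg_iff) hw.shiftInvariant_inversions
    fun ⟨a, b⟩ => by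
      change _ ∧ -w (- -a) < -w (- -b) ↔ _ ∧ _
      simp only [Equiv.trans_apply, Equiv.neg_apply, Equiv.prodComm_apply, Prod.swap, neg_neg,
        Prod.fst_neg, Prod.snd_neg]
      omega

theorem ncard_window_inter_add_sdiff {n : ℕ} (hn : 0 < n) {w : Equiv.Perm ℤ}
    (hw : IsPeriodic n w) (T : Set (ℤ × ℤ)) :
    (window n (inversions w ∩ T)).ncard + (window n (inversions w \ T)).ncard = affLen n w := by
  rw [← window_inter, ← window_sdiff]
  exact Set.ncard_inter_add_ncard_sdiff_eq_ncard _ _ (hw.finite_window_inversions hn)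

theorem affLen_mul_add {n : ℕ} (hn : 0 < n) {w t : Equiv.Perm ℤ} (hw : IsPeriodic n w)
    (ht : IsPeriodic n t) (htt : Function.Involutive t) :
    affLen n (w * t) + 2 * (window n (inversions w ∩ inversions t)).ncard =
      affLen n w + affLen n t := by
  have hwt := hw.mul ht
  have sdiff_eq : (window n (inversions w \ inversions t)).ncard =
      (window n (inversions (w * t) \ inversions t)).ncard :=
    ncard_window_eq_of_equiv hn (Equiv.prodCongr t t) (fun _ _ => ht.diagShift_map_iff)
      (hwt.shiftInvariant_inversions.sdiff ht.shiftInvariant_inversions) fun ⟨a, b⟩ => by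
        change (_ ∧ _) ∧ ¬ (_ ∧ _) ↔ (_ ∧ _) ∧ ¬ (_ ∧ _)
        simp only [Equiv.prodCongr_apply, Prod.map, htt _, Equiv.Perm.coe_mul, Function.comp_apply]
        rcases lt_trichotomy a b with h | rfl | h
        · have := t.injective.ne h.ne
          constructor <;> intro <;> omega
        · simp
        · constructor <;> intro <;> omega
  have inter_eq : (window n (inversions t \ inversions w)).ncard =
      (window n (inversions (w * t) ∩ inversions t)).ncard :=
    ncard_window_eq_of_equiv hn ((Equiv.prodCongr t t).trans (Equiv.prodComm ℤ ℤ))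
      (fun _ _ => ht.diagShift_map_swap_iff)
      (hwt.shiftInvariant_inversions.inter ht.shiftInvariant_inversions) fun ⟨a, b⟩ => by
        change (_ ∧ _) ∧ ¬ (_ ∧ _) ↔ (_ ∧ _) ∧ (_ ∧ _)
        simp only [Equiv.trans_apply, Equiv.prodCongr_apply, Equiv.prodComm_apply, Prod.map,
          Prod.swap, htt _, Equiv.Perm.coe_mul, Function.comp_apply]
        rcases lt_trichotomy a b with h | rfl | h
        · have := w.injective.ne (t.injective.ne h.ne)
          constructor <;> intro <;> omega
        · simp
        · constructor <;> intro <;> omega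
  have h₁ := ncard_window_inter_add_sdiff hn hwt (inversions t)
  have h₂ := ncard_window_inter_add_sdiff hn hw (inversions t)
  have h₃ := ncard_window_inter_add_sdiff hn ht (inversions w)
  rw [Set.inter_comm] at h₃
  omega

section Reflection

variable {n : ℕ} {i j x : ℤ}

theorem tPerm_apply_of_modEq_left (h : x ≡ i [ZMOD n]) : tPerm n i j x = x + (j - i) :=
  if_pos (Int.modEq_iff_dvd.1 h.symm)

theorem tPerm_apply_of_modEq_right (hi : ¬ x ≡ i [ZMOD n]) (hj : x ≡ j [ZMOD n]) :
    tPerm n i j x = x - (j - i) := by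
  change tFun n i j x = _
  rw [tFun, if_neg fun h => hi (Int.modEq_iff_dvd.2 h).symm,
    if_pos (Int.modEq_iff_dvd.1 hj.symm)]

theorem tPerm_apply_of_not_modEq (hi : ¬ x ≡ i [ZMOD n]) (hj : ¬ x ≡ j [ZMOD n]) :
    tPerm n i j x = x := by
  change tFun n i j x = _
  rw [tFun, if_neg fun h => hi (Int.modEq_iff_dvd.2 h).symm,
    if_neg fun h => hj (Int.modEq_iff_dvd.2 h).symm]

theorem tPerm_apply_left : tPerm n i j i = j := by
  rw [tPerm_apply_of_modEq_left Int.ModEq.rfl]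
  ring

theorem tPerm_apply_right (h : ¬ i ≡ j [ZMOD n]) : tPerm n i j j = i := by
  rw [tPerm_apply_of_modEq_right (fun h' => h h'.symm) Int.ModEq.rfl]
  ring

theorem tPerm_apply_of_lt_of_lt (hjn : j - i < n) (hix : i < x) (hxj : x < j) :
    tPerm n i j x = x :=
  tPerm_apply_of_not_modEq (fun h => Int.not_modEq_of_lt_of_sub_lt hix (by omega) h.symm)
    (Int.not_modEq_of_lt_of_sub_lt hxj (by omega))

theorem tPerm_apply_le (hij : i ≤ j) (hi : ¬ x ≡ i [ZMOD n]) : tPerm n i j x ≤ x := by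
  by_cases hj : x ≡ j [ZMOD n]
  · rw [tPerm_apply_of_modEq_right hi hj]; omega
  · rw [tPerm_apply_of_not_modEq hi hj]

theorem le_tPerm_apply (hij : i ≤ j) (hj : ¬ x ≡ j [ZMOD n]) : x ≤ tPerm n i j x := by
  by_cases hi : x ≡ i [ZMOD n]
  · rw [tPerm_apply_of_modEq_left hi]; omega
  · rw [tPerm_apply_of_not_modEq hi hj]

theorem sub_le_tPerm_apply (hij : i ≤ j) : x - (j - i) ≤ tPerm n i j x := by
  by_cases hj : x ≡ j [ZMOD n]
  · by_cases hi : x ≡ i [ZMOD n]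
    · rw [tPerm_apply_of_modEq_left hi]; omega
    · rw [tPerm_apply_of_modEq_right hi hj]
  · linarith [le_tPerm_apply (n := n) hij hj]

theorem isPeriodic_tPerm (n : ℕ) (i j : ℤ) : IsPeriodic n (tPerm n i j) := fun x => by
  by_cases hi : x ≡ i [ZMOD n]
  · rw [tPerm_apply_of_modEq_left hi, tPerm_apply_of_modEq_left (Int.add_modulus_modEq_iff.2 hi)]
    ring
  by_cases hj : x ≡ j [ZMOD n]
  · rw [tPerm_apply_of_modEq_right hi hj, tPerm_apply_of_modEq_right
      (mt Int.add_modulus_modEq_iff.1 hi) (Int.add_modulus_modEq_iff.2 hj)]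
    ring
  · rw [tPerm_apply_of_not_modEq hi hj, tPerm_apply_of_not_modEq
      (mt Int.add_modulus_modEq_iff.1 hi) (mt Int.add_modulus_modEq_iff.1 hj)]

theorem involutive_tPerm (h : ¬ i ≡ j [ZMOD n]) : Function.Involutive (tPerm n i j) := fun x => by
  by_cases hi : x ≡ i [ZMOD n]
  · have hj : x + (j - i) ≡ j [ZMOD n] := by simpa using hi.add_right (j - i)
    rw [tPerm_apply_of_modEq_left hi,
      tPerm_apply_of_modEq_right (fun h' => h (h'.symm.trans hj)) hj]
    ring
  by_cases hj : x ≡ j [ZMOD n]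
  · rw [tPerm_apply_of_modEq_right hi hj,
      tPerm_apply_of_modEq_left (by simpa using hj.sub_right (j - i))]
    ring
  · rw [tPerm_apply_of_not_modEq hi hj, tPerm_apply_of_not_modEq hi hj]

theorem conj_neg_tPerm (h : ¬ i ≡ j [ZMOD n]) :
    MulAut.conj (Equiv.neg ℤ) (tPerm n i j) = tPerm n (-j) (-i) := by
  ext x
  have hconj : (MulAut.conj (Equiv.neg ℤ) (tPerm n i j)) x = -tPerm n i j (-x) := rfl
  rw [hconj]
  by_cases hj : x ≡ -j [ZMOD n]
  · have hj' : -x ≡ j [ZMOD n] := by simpa using hj.neg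
    rw [tPerm_apply_of_modEq_left hj,
      tPerm_apply_of_modEq_right (fun hi => h (hi.symm.trans hj')) hj']
    ring
  by_cases hi : x ≡ -i [ZMOD n]
  · rw [tPerm_apply_of_modEq_right hj hi, tPerm_apply_of_modEq_left (by simpa using hi.neg)]
    ring
  · rw [tPerm_apply_of_not_modEq hj hi, tPerm_apply_of_not_modEq
      (fun h' => hi (by simpa using h'.neg)) (fun h' => hj (by simpa using h'.neg))]
    ring

end Reflection

/-- One representative of each shift class of inversions of `t_{ij}` when `0 < j - i < n`. -/
noncomputable def hook (i j : ℤ) : Finset (ℤ × ℤ) :=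
  {(i, j)} ∪ (Ioo i j).image (fun k => (i, k)) ∪ (Ioo i j).image (fun k => (k, j))

noncomputable def hookCount (w : Equiv.Perm ℤ) (i j : ℤ) : ℕ :=
  (if w j < w i then 1 else 0) + #{k ∈ Ioo i j | w k < w i} + #{k ∈ Ioo i j | w j < w k}

section Hook

variable {n : ℕ} {i j : ℤ}

theorem mem_hook (hij : i < j) {q : ℤ × ℤ} :
    q ∈ hook i j ↔ i ≤ q.1 ∧ q.1 < q.2 ∧ q.2 ≤ j ∧ (q.1 = i ∨ q.2 = j) := by
  obtain ⟨a, b⟩ := q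
  simp only [hook, Finset.mem_union, Finset.mem_singleton, Finset.mem_image, Finset.mem_Ioo,
    Prod.mk.injEq]
  constructor
  · rintro ((⟨rfl, rfl⟩ | ⟨k, hk, rfl, rfl⟩) | ⟨k, hk, rfl, rfl⟩) <;> omega
  · rintro ⟨h₁, h₂, h₃, rfl | rfl⟩
    · by_cases hb : b = j
      · exact Or.inl (Or.inl ⟨rfl, hb⟩)
      · exact Or.inl (Or.inr ⟨b, ⟨h₂, by omega⟩, rfl, rfl⟩)
    · by_cases ha : a = i
      · exact Or.inl (Or.inl ⟨ha, rfl⟩)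
      · exact Or.inr ⟨a, ⟨by omega, h₂⟩, rfl, rfl⟩

theorem card_filter_hook (w : Equiv.Perm ℤ) :
    #{q ∈ hook i j | w q.2 < w q.1} = hookCount w i j := by
  have hdisj₁ : Disjoint ({(i, j)} : Finset (ℤ × ℤ)) ((Ioo i j).image fun k => (i, k)) := by
    simp
  have hdisj₂ : Disjoint ({(i, j)} ∪ (Ioo i j).image fun k => (i, k))
      ((Ioo i j).image fun k => (k, j)) := by
    simp only [Finset.disjoint_left, Finset.mem_union, Finset.mem_singleton, Finset.mem_image,
      Finset.mem_Ioo]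
    rintro _ ((rfl | ⟨k, hk, rfl⟩)) ⟨k', hk', h⟩ <;> simp only [Prod.mk.injEq] at h <;> omega
  rw [hook, Finset.filter_union, Finset.card_union_of_disjoint
    (Finset.disjoint_filter_filter hdisj₂), Finset.filter_union, Finset.card_union_of_disjoint
    (Finset.disjoint_filter_filter hdisj₁), Finset.filter_singleton, Finset.filter_image,
    Finset.filter_image, Finset.card_image_of_injective _ (Prod.mk_right_injective i),
    Finset.card_image_of_injective _ (Prod.mk_left_injective j), hookCount]
  split_ifs <;> rfl

theorem hookCount_congr (hij : i ≤ j) {w w' : Equiv.Perm ℤ} (h : ∀ k ∈ Icc i j, w k = w' k) :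
    hookCount w i j = hookCount w' i j := by
  have hIoo : ∀ k ∈ Ioo i j, w k = w' k := fun k hk => h k (Finset.Ioo_subset_Icc_self hk)
  rw [hookCount, hookCount, h i (by simp [hij]), h j (by simp [hij]),
    Finset.filter_congr fun k hk => by rw [hIoo k hk],
    Finset.filter_congr (s := Ioo i j) (p := fun k => w' j < w k) fun k hk => by rw [hIoo k hk]]

theorem hookCount_eq_of_forall_lt (hij : i < j) {w : Equiv.Perm ℤ}
    (h : ∀ k ∈ Ico i j, w k < w j) : hookCount w i j = #{k ∈ Ioo i j | w k < w i} := by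
  have hi := h i (by simp [hij])
  rw [hookCount, if_neg (by omega), Finset.filter_false_of_mem fun k hk =>
    not_lt.2 (h k (Finset.Ioo_subset_Ico_self hk)).le]
  simp

theorem exists_mem_hook_diagShift (hij : i < j) (hjn : j - i < n) {p : ℤ × ℤ}
    (hp : p ∈ inversions (tPerm n i j)) : ∃ q ∈ hook i j, DiagShift n p q := by
  obtain ⟨a, b⟩ := p
  obtain ⟨hab, hba⟩ := hp
  dsimp only at hab hba
  by_cases hai : a ≡ i [ZMOD n]
  · rw [tPerm_apply_of_modEq_left hai] at hba
    have hba' : b - a ≤ j - i := by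
      by_cases hbi : b ≡ i [ZMOD n]
      · rw [tPerm_apply_of_modEq_left hbi] at hba; omega
      by_cases hbj : b ≡ j [ZMOD n]
      · rw [tPerm_apply_of_modEq_right hbi hbj] at hba
        exact ((hbj.sub hai).eq_of_abs_lt (abs_sub_lt_iff.2 ⟨by omega, by omega⟩)).le
      · rw [tPerm_apply_of_not_modEq hbi hbj] at hba; omega
    exact ⟨(i, b - a + i), (mem_hook hij).2 ⟨le_rfl, by dsimp; omega, by dsimp; omega, .inl rfl⟩,
      hai, by dsimp; ring⟩
  by_cases haj : a ≡ j [ZMOD n]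
  · rw [tPerm_apply_of_modEq_right hai haj] at hba
    linarith [sub_le_tPerm_apply (n := n) (x := b) hij.le]
  rw [tPerm_apply_of_not_modEq hai haj] at hba
  have hbj : b ≡ j [ZMOD n] := by
    by_contra hbj
    linarith [le_tPerm_apply (n := n) (i := i) hij.le hbj]
  have hbi : ¬ b ≡ i [ZMOD n] := fun hbi => by
    rw [tPerm_apply_of_modEq_left hbi] at hba; omega
  rw [tPerm_apply_of_modEq_right hbi hbj] at hba
  refine ⟨(a - b + j, j), (mem_hook hij).2 ⟨by dsimp; omega, by dsimp; omega, le_rfl, .inr rfl⟩,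
    ?_, by dsimp; ring⟩
  simpa using (hbj.add_left (a - b))

theorem mem_inversions_tPerm_of_mem_hook (hij : i < j) (hjn : j - i < n) {q : ℤ × ℤ}
    (hq : q ∈ hook i j) : q ∈ inversions (tPerm n i j) := by
  have hmod := Int.not_modEq_of_lt_of_sub_lt hij hjn
  obtain ⟨a, b⟩ := q
  obtain ⟨h₁, h₂, h₃, rfl | rfl⟩ := (mem_hook hij).1 hq <;> dsimp only at h₁ h₂ h₃
  · refine ⟨h₂, ?_⟩
    rw [tPerm_apply_left]
    rcases h₃.lt_or_eq with h | rfl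
    · rwa [tPerm_apply_of_lt_of_lt hjn h₂ h]
    · rwa [tPerm_apply_right hmod]
  · refine ⟨h₂, ?_⟩
    rw [tPerm_apply_right hmod]
    rcases h₁.lt_or_eq with h | rfl
    · rwa [tPerm_apply_of_lt_of_lt hjn h h₂]
    · rwa [tPerm_apply_left]

theorem ncard_window_inversions_inter_tPerm (hn : 0 < n) {w : Equiv.Perm ℤ} (hw : IsPeriodic n w)
    (hij : i < j) (hjn : j - i < n) :
    (window n (inversions w ∩ inversions (tPerm n i j))).ncard = hookCount w i j := by
  rw [← card_filter_hook, ← Set.ncard_coe_finset]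
  apply ncard_window_eq_of_transversal hn
    (hw.shiftInvariant_inversions.inter (isPeriodic_tPerm n i j).shiftInvariant_inversions)
  · intro q hq
    rw [Finset.coe_filter] at hq
    exact ⟨⟨((mem_hook hij).1 hq.1).2.1, hq.2⟩, mem_inversions_tPerm_of_mem_hook hij hjn hq.1⟩
  · rintro p ⟨hpw, hpt⟩
    obtain ⟨q, hq, hpq⟩ := exists_mem_hook_diagShift hij hjn hpt
    exact ⟨q, by simpa using ⟨hq, ((hw.shiftInvariant_inversions p q hpq).1 hpw).2⟩, hpq⟩
  · intro p hp q hq hpq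
    have hp' := (mem_hook hij).1 (Finset.mem_filter.1 hp).1
    have hq' := (mem_hook hij).1 (Finset.mem_filter.1 hq).1
    exact hpq.eq_of_abs_fst_sub_lt (abs_sub_lt_iff.2 ⟨by omega, by omega⟩)

theorem affLen_tPerm (hn : 0 < n) (hij : i < j) (hjn : j - i < n) :
    affLen n (tPerm n i j) = 1 + 2 * #(Ioo i j) := by
  have hmod := Int.not_modEq_of_lt_of_sub_lt hij hjn
  rw [affLen_eq_ncard_window, ← Set.inter_self (inversions _),
    ncard_window_inversions_inter_tPerm hn (isPeriodic_tPerm n i j) hij hjn, hookCount,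
    tPerm_apply_left, tPerm_apply_right hmod, if_pos hij]
  have hfix : ∀ k ∈ Ioo i j, tPerm n i j k = k := fun k hk =>
    tPerm_apply_of_lt_of_lt hjn (Finset.mem_Ioo.1 hk).1 (Finset.mem_Ioo.1 hk).2
  rw [Finset.filter_true_of_mem fun k hk => by rw [hfix k hk]; exact (Finset.mem_Ioo.1 hk).2,
    Finset.filter_true_of_mem fun k hk => by rw [hfix k hk]; exact (Finset.mem_Ioo.1 hk).1]
  ring

end Hook

def RightEndpoints (z : Equiv.Perm ℤ) (i j : ℤ) : Prop := ∀ e, i ≤ e → e < j → z e < e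

namespace RightEndpoints

variable {n : ℕ} {z : Equiv.Perm ℤ} {i j : ℤ}

theorem sub_lt (hend : RightEndpoints z i j) (hn : 0 < n) (hz : IsPeriodic n z)
    (hinv : Function.Involutive z) : j - i < n := by
  by_contra! h
  have hall : ∀ x, z x < x := fun x => by
    have he : i + (x - i) % n ≡ x [ZMOD n] := by
      simpa using (Int.mod_modEq (x - i) n).add_left i
    have := hz.apply_sub_eq he
    have := Int.emod_nonneg (x - i) (by omega : (n : ℤ) ≠ 0)
    have := Int.emod_lt_of_pos (x - i) (by omega : (0 : ℤ) < n)
    have := hend (i + (x - i) % n) (by omega) (by omega)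
    omega
  have := hall (z i)
  rw [hinv i] at this
  linarith [hall i]

theorem apply_lt (hend : RightEndpoints z i j) (hinv : Function.Involutive z) {k : ℤ}
    (hik : i ≤ k) (hkj : k < j) : z k < i := by
  have hk := hend k hik hkj
  by_contra! h
  have := hend (z k) h (by omega)
  rw [hinv k] at this
  omega

theorem apply_not_modEq_left (hend : RightEndpoints z i j) (hz : IsPeriodic n z)
    (hinv : Function.Involutive z) {k : ℤ} (hik : i ≤ k) (hkj : k < j) :
    ¬ z k ≡ i [ZMOD n] := fun h => by
  have := hz.apply_sub_eq h
  rw [hinv k] at this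
  have := hend.apply_lt hinv hik hkj
  have := hend i le_rfl (by omega)
  omega

theorem lt_apply_of_apply_modEq_right (hend : RightEndpoints z i j) (hz : IsPeriodic n z)
    (hinv : Function.Involutive z) {k : ℤ} (hik : i ≤ k) (hkj : k < j)
    (h : z k ≡ j [ZMOD n]) : j < z j := by
  have := hz.apply_sub_eq h
  rw [hinv k] at this
  have := hend k hik hkj
  omega

theorem tPerm_apply_apply_of_apply_le (hend : RightEndpoints z i j) (hz : IsPeriodic n z)
    (hinv : Function.Involutive z) (hzj : z j ≤ j) {k : ℤ} (hik : i ≤ k) (hkj : k < j) :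
    tPerm n i j (z k) = z k :=
  tPerm_apply_of_not_modEq (hend.apply_not_modEq_left hz hinv hik hkj)
    fun h => by linarith [hend.lt_apply_of_apply_modEq_right hz hinv hik hkj h]

theorem hookCount_tPerm_mul_of_apply_lt (hend : RightEndpoints z i j) (hz : IsPeriodic n z)
    (hinv : Function.Involutive z) (hij : i < j) (hzj : z j < j) :
    hookCount (tPerm n i j * z) i j = hookCount z i j :=
  hookCount_congr hij.le fun k hk => by
    rw [Equiv.Perm.mul_apply]
    obtain ⟨hik, hkj⟩ := Finset.mem_Icc.1 hk
    rcases hkj.lt_or_eq with hkj | rfl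
    · exact hend.tPerm_apply_apply_of_apply_le hz hinv hzj.le hik hkj
    have hzk : z k < i := by
      by_contra! h
      have := hend (z k) h hzj
      rw [hinv k] at this
      omega
    apply tPerm_apply_of_not_modEq <;> intro h <;> have := hz.apply_sub_eq h <;>
      rw [hinv k] at this
    · linarith [hend i le_rfl hij]
    · omega

theorem hookCount_tPerm_mul_of_apply_eq (hend : RightEndpoints z i j) (hz : IsPeriodic n z)
    (hinv : Function.Involutive z) (hij : i < j) (hjn : j - i < n) (hzj : z j = j) :
    hookCount (tPerm n i j * z) i j = hookCount z i j := by
  have hfix : ∀ k ∈ Ico i j, tPerm n i j (z k) = z k := fun k hk =>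
    hend.tPerm_apply_apply_of_apply_le hz hinv hzj.le (Finset.mem_Ico.1 hk).1
      (Finset.mem_Ico.1 hk).2
  have hlt : ∀ k ∈ Ico i j, z k < i := fun k hk =>
    hend.apply_lt hinv (Finset.mem_Ico.1 hk).1 (Finset.mem_Ico.1 hk).2
  have hi : i ∈ Ico i j := by simp [hij]
  rw [hookCount_eq_of_forall_lt hij fun k hk => by
      rw [Equiv.Perm.mul_apply, Equiv.Perm.mul_apply, hfix k hk, hzj,
        tPerm_apply_right (Int.not_modEq_of_lt_of_sub_lt hij hjn)]
      exact hlt k hk,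
    hookCount_eq_of_forall_lt hij fun k hk => by rw [hzj]; linarith [hlt k hk]]
  simp only [Equiv.Perm.mul_apply, hfix i hi]
  congr 1
  exact Finset.filter_congr fun k hk => by rw [hfix k (Finset.Ioo_subset_Ico_self hk)]

theorem filter_tPerm_apply_lt_eq_of_apply_modEq (hend : RightEndpoints z i j)
    (hz : IsPeriodic n z) (hinv : Function.Involutive z) (hij : i < j) (hjn : j - i < n)
    (hzi : z i ≡ j [ZMOD n]) :
    {k ∈ Ioo i j | tPerm n i j (z k) < tPerm n i j (z i)} = {k ∈ Ioo i j | z k < z i} := by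
  rw [tPerm_apply_of_modEq_right (hend.apply_not_modEq_left hz hinv le_rfl hij) hzi]
  refine Finset.filter_congr fun k hk => ?_
  obtain ⟨hik, hkj⟩ := Finset.mem_Ioo.1 hk
  have hzk : ¬ z k ≡ j [ZMOD n] := fun h => hik.ne <|
    (hz.modEq_iff.1 (hzi.trans h.symm)).eq_of_abs_lt (abs_sub_lt_iff.2 ⟨by omega, by omega⟩)
  rw [tPerm_apply_of_not_modEq (hend.apply_not_modEq_left hz hinv hik.le hkj) hzk]
  refine ⟨fun h => by omega, fun h => ?_⟩
  -- otherwise `e = z k - z i + j ∈ [i, j)` would be a right endpoint with `e ≡ z k`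
  by_contra! hge
  have he : z k - z i + j ≡ z k [ZMOD n] := by simpa using hzi.symm.add_left (z k - z i)
  have := hz.apply_sub_eq he
  rw [hinv k] at this
  have := hend (z k - z i + j) (by omega) (by omega)
  have := hend.apply_lt hinv hik.le hkj
  omega

theorem card_filter_tPerm_apply_lt_of_not_modEq (hend : RightEndpoints z i j)
    (hz : IsPeriodic n z) (hinv : Function.Involutive z) (hij : i < j) (hjn : j - i < n)
    (hzi : ¬ z i ≡ j [ZMOD n]) :
    #{k ∈ Ioo i j | tPerm n i j (z k) < tPerm n i j (z i)} = #{k ∈ Ioo i j | z k < z i} ∨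
      (#{k ∈ Ioo i j | tPerm n i j (z k) < tPerm n i j (z i)} =
          #{k ∈ Ioo i j | z k < z i} + 1 ∧
        #{k ∈ Ioo i j | tPerm n i j (z k) < tPerm n i j (z i)} ≤ #(Ioo i j)) := by
  rw [tPerm_apply_of_not_modEq (hend.apply_not_modEq_left hz hinv le_rfl hij) hzi]
  have hsub : {k ∈ Ioo i j | z k < z i} ⊆ {k ∈ Ioo i j | tPerm n i j (z k) < z i} :=
    Finset.monotone_filter_right _ fun k hk h => lt_of_le_of_lt (tPerm_apply_le hij.le
      (hend.apply_not_modEq_left hz hinv (Finset.mem_Ioo.1 hk).1.le (Finset.mem_Ioo.1 hk).2)) h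
  -- a newly counted `k` has `z k` moved by `t_{ij}`, so `z k ≡ j`, which determines `k`
  have hnew : #({k ∈ Ioo i j | tPerm n i j (z k) < z i} \ {k ∈ Ioo i j | z k < z i}) ≤ 1 := by
    have hmodj : ∀ k ∈ {k ∈ Ioo i j | tPerm n i j (z k) < z i} \ {k ∈ Ioo i j | z k < z i},
        i < k ∧ k < j ∧ z k ≡ j [ZMOD n] := by
      intro k hk
      simp only [Finset.mem_sdiff, Finset.mem_filter, Finset.mem_Ioo, not_and, not_lt] at hk
      refine ⟨hk.1.1.1, hk.1.1.2, by_contra fun h => ?_⟩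
      rw [tPerm_apply_of_not_modEq (hend.apply_not_modEq_left hz hinv hk.1.1.1.le hk.1.1.2) h]
        at hk
      exact absurd hk.1.2 (not_lt.2 (hk.2 hk.1.1))
    refine Finset.card_le_one.2 fun k hk k' hk' => ?_
    obtain ⟨hik, hkj, hkmod⟩ := hmodj k hk
    obtain ⟨hik', hkj', hkmod'⟩ := hmodj k' hk'
    exact (hz.modEq_iff.1 (hkmod.trans hkmod'.symm)).eq_of_abs_lt
      (abs_sub_lt_iff.2 ⟨by omega, by omega⟩)
  have := Finset.card_sdiff_add_card_eq_card hsub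
  have := Finset.card_filter_le (Ioo i j) fun k => tPerm n i j (z k) < z i
  omega

theorem hookCount_tPerm_mul_of_lt_apply (hend : RightEndpoints z i j) (hz : IsPeriodic n z)
    (hinv : Function.Involutive z) (hij : i < j) (hjn : j - i < n) (hzj : j < z j) :
    hookCount (tPerm n i j * z) i j = hookCount z i j ∨
      (hookCount (tPerm n i j * z) i j = hookCount z i j + 1 ∧
        hookCount (tPerm n i j * z) i j ≤ #(Ioo i j)) := by
  have hlt : ∀ k ∈ Ico i j, z k < i := fun k hk =>
    hend.apply_lt hinv (Finset.mem_Ico.1 hk).1 (Finset.mem_Ico.1 hk).2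
  have hzj' : z j ≤ tPerm n i j (z j) := le_tPerm_apply hij.le fun h => by
    have := hz.apply_sub_eq h
    rw [hinv j] at this
    omega
  rw [hookCount_eq_of_forall_lt hij fun k hk => by
      rw [Equiv.Perm.mul_apply, Equiv.Perm.mul_apply]
      have := tPerm_apply_le hij.le (hend.apply_not_modEq_left hz hinv
        (Finset.mem_Ico.1 hk).1 (Finset.mem_Ico.1 hk).2)
      linarith [hlt k hk],
    hookCount_eq_of_forall_lt hij fun k hk => by linarith [hlt k hk]]
  by_cases hzi : z i ≡ j [ZMOD n]
  · exact .inl (congrArg card (hend.filter_tPerm_apply_lt_eq_of_apply_modEq hz hinv hij hjn hzi))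
  · exact hend.card_filter_tPerm_apply_lt_of_not_modEq hz hinv hij hjn hzi

theorem hookCount_tPerm_mul (hend : RightEndpoints z i j) (hz : IsPeriodic n z)
    (hinv : Function.Involutive z) (hij : i < j) (hjn : j - i < n) :
    hookCount (tPerm n i j * z) i j = hookCount z i j ∨
      (hookCount (tPerm n i j * z) i j = hookCount z i j + 1 ∧
        hookCount (tPerm n i j * z) i j ≤ #(Ioo i j)) := by
  rcases lt_trichotomy (z j) j with h | h | h
  · exact .inl (hend.hookCount_tPerm_mul_of_apply_lt hz hinv hij h)
  · exact .inl (hend.hookCount_tPerm_mul_of_apply_eq hz hinv hij hjn h)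
  · exact hend.hookCount_tPerm_mul_of_lt_apply hz hinv hij hjn h

theorem conj_cover (hend : RightEndpoints z i j) (hn : 0 < n) (hz : IsPeriodic n z)
    (hinv : Function.Involutive z) (hij : i < j) :
    affLen n (tPerm n i j * z * tPerm n i j) = affLen n z + 2 ↔
      affLen n (z * tPerm n i j) = affLen n z + 1 := by
  have hjn := hend.sub_lt hn hz hinv
  have ht := isPeriodic_tPerm n i j
  have htt := involutive_tPerm (Int.not_modEq_of_lt_of_sub_lt hij hjn)
  have hzt := affLen_mul_add hn hz ht htt
  have htzt := affLen_mul_add hn (ht.mul hz) ht htt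
  rw [ncard_window_inversions_inter_tPerm hn hz hij hjn] at hzt
  rw [ncard_window_inversions_inter_tPerm hn (ht.mul hz) hij hjn] at htzt
  have htz : affLen n (tPerm n i j * z) = affLen n (z * tPerm n i j) := by
    rw [← affLen_inv hn (hz.mul ht), mul_inv_rev,
      show (tPerm n i j)⁻¹ = tPerm n i j from Function.Involutive.symm_eq_self_of_involutive _ htt,
      show z⁻¹ = z from Function.Involutive.symm_eq_self_of_involutive _ hinv]
  have := affLen_tPerm hn hij hjn
  rcases hend.hookCount_tPerm_mul hz hinv hij hjn with h | h <;> omega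

end RightEndpoints

/-- Let `z ∈ Ĩ_n` and `i < j` with `j ≢ i (mod n)`. Suppose either all of
`i, i+1, …, j-1` are right endpoints of `z`, or all of `i+1, …, j-1, j` are left endpoints
of `z`. Then `ℓ(t_{ij} z t_{ij}) = ℓ(z) + 2` if and only if `ℓ(z t_{ij}) = ℓ(z) + 1`. -/
theorem conj_cover (n : ℕ) (hn : 2 ≤ n) (z : Equiv.Perm ℤ)
    (hz : IsAffine n z) (hinv : ∀ x : ℤ, z (z x) = x) (i j : ℤ)
    (hij : i < j) (hmod : ¬ i ≡ j [ZMOD (n : ℤ)])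
    (hend : (∀ e : ℤ, i ≤ e → e < j → z e < e) ∨ (∀ e : ℤ, i < e → e ≤ j → e < z e)) :
    affLen n (tPerm n i j * z * tPerm n i j) = affLen n z + 2 ↔
      affLen n (z * tPerm n i j) = affLen n z + 1 := by
  have hn : 0 < n := by omega
  have hper : IsPeriodic n z := hz.1
  rcases hend with hright | hleft
  · exact RightEndpoints.conj_cover hright hn hper hinv hij
  have hright : RightEndpoints (MulAut.conj (Equiv.neg ℤ) z) (-j) (-i) := fun e he₁ he₂ => by
    have := hleft (-e) (by omega) (by omega)
    change -z (-e) < e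
    omega
  have key := hright.conj_cover hn hper.conj_neg (fun x => by simp [hinv]) (neg_lt_neg hij)
  have ht := isPeriodic_tPerm n i j
  rwa [← conj_neg_tPerm hmod, ← map_mul, ← map_mul, ← map_mul, affLen_conj_neg hn
    ((ht.mul hper).mul ht), affLen_conj_neg hn hper, affLen_conj_neg hn (hper.mul ht)] at key
end
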